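/- The two versions of the rounding algorithm are equivalent: the set of facilities opened by the sequential version (which considers clients in increasing order of their clocks R_j, lets i = argmin_{i : x_{ij}>0} Q_i and j' = argmin_{j' : x_{ij'}>0} R_{j'}, opens i and connects j to i if j = j', and otherwise connects j to the same facility as j') equals the set of facilities lying on a 2-cycle of the connection graph H(x), and both versions assign every client to the same facility, namely the last facility on its connection path. -/

import Mathlib

/-!
STATEMENT 3: The two versions of the rounding algorithm are equivalent: the set of facilities
opened by the sequential version (which considers clients in increasing order of their clocks
R_j, lets i = argmin_{i : x_{ij}>0} Q_i and j' = argmin_{j' : x_{ij'}>0} R_{j'}, opens i and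
connects j to i if j = j', and otherwise connects j to the same facility as j') equals the set
of facilities lying on a 2-cycle of the connection graph H(x), and both versions assign every
client to the same facility, namely the last facility on its connection path.
-/

namespace DFL3

noncomputable section

variable {F C : Type*}

/-- Facilities fractionally serving client `j` (neighborhood of `j` in the support graph). -/
def facNbrs [Fintype F] (x : F → C → ℝ) (j : C) : Finset F :=
  Finset.univ.filter fun i => 0 < x i j

/-- Clients fractionally served by facility `i` (neighborhood of `i` in the support graph). -/
def cliNbrs [Fintype C] (x : F → C → ℝ) (i : F) : Finset C :=
  Finset.univ.filter fun j => 0 < x i j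

/-- An element of a nonempty finset minimizing `f`. -/
def argminOn {α : Type*} (f : α → ℝ) (s : Finset α) (h : s.Nonempty) : α :=
  Classical.choose (s.exists_min_image f h)

/-- The connection graph: every vertex points to the neighbor (in the support graph of `x`)
with the smallest clock value (`Q` on facilities, `R` on clients). -/
def nextV [Fintype F] [Fintype C] (x : F → C → ℝ) (Q : F → ℝ) (R : C → ℝ) :
    F ⊕ C → Option (F ⊕ C)
  | Sum.inl i =>
    if h : (cliNbrs x i).Nonempty then some (Sum.inr (argminOn R _ h)) else none
  | Sum.inr j =>
    if h : (facNbrs x j).Nonempty then some (Sum.inl (argminOn Q _ h)) else none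

/-- Follow `next`, accumulating visited vertices and stopping just before revisiting one. -/
def pathAux {α : Type*} [DecidableEq α] (next : α → Option α) :
    ℕ → List α → α → List α
  | 0, vis, v => vis ++ [v]
  | n+1, vis, v =>
    match next v with
    | none => vis ++ [v]
    | some w => if w ∈ vis ++ [v] then vis ++ [v] else pathAux next n (vis ++ [v]) w

/-- The connection path of client `j`: start at `j` and repeatedly follow the unique outgoing
arc of the connection graph, stopping just before revisiting an already visited vertex. -/
def connPath [Fintype F] [Fintype C] [DecidableEq F] [DecidableEq C]
    (x : F → C → ℝ) (Q : F → ℝ) (R : C → ℝ) (j : C) : List (F ⊕ C) :=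
  pathAux (nextV x Q R) (Fintype.card F + Fintype.card C) List.nil (Sum.inr j)

/-- The path `p` traverses the arc `(u, v)`. -/
def traverses {α : Type*} (p : List α) (u v : α) : Prop :=
  ∃ l1 l2 : List α, p = l1 ++ u :: v :: l2

/-- The last facility on a path: the facility to which a client is assigned. -/
def assignedFac (p : List (F ⊕ C)) : Option F :=
  p.reverse.findSome? Sum.getLeft?

/-- Facility `i` lies on a 2-cycle of the connection graph, i.e. it is opened. -/
def opens [Fintype F] [Fintype C] (x : F → C → ℝ) (Q : F → ℝ) (R : C → ℝ) (i : F) : Prop :=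
  ∃ j : C, nextV x Q R (Sum.inl i) = some (Sum.inr j) ∧
    nextV x Q R (Sum.inr j) = some (Sum.inl i)

/-- A preprocessed fractional solution: `x i j ∈ {0, y i}`, `y i ∈ [0,1]`, and every client is
fully fractionally connected. -/
def Preprocessed [Fintype F] (x : F → C → ℝ) (y : F → ℝ) : Prop :=
  (∀ i j, x i j = 0 ∨ x i j = y i) ∧ (∀ i, y i ∈ Set.Icc (0:ℝ) 1) ∧ (∀ j, ∑ i, x i j = 1)

end

noncomputable section
/-- The sequential version of the algorithm (with fuel): when client `j` is considered, let
`i` be the facility with smallest clock among those fractionally serving `j` and `j'` the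
client with smallest clock among those fractionally served by `i`; if `j = j'` then `j` is
connected to `i` (and `i` is opened), otherwise `j` is connected to the same facility as
`j'` (note that `R j' < R j`, so `j'` was considered before `j`). -/
def seqAssign {F C : Type*} [Fintype F] [Fintype C] [DecidableEq C]
    (x : F → C → ℝ) (Q : F → ℝ) (R : C → ℝ) : ℕ → C → Option F
  | 0, _ => none
  | n+1, j =>
    match nextV x Q R (Sum.inr j) with
    | some (Sum.inl i) =>
      match nextV x Q R (Sum.inl i) with
      | some (Sum.inr j') => if j' = j then some i else seqAssign x Q R n j'
      | _ => none
    | _ => none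

/-- The set of facilities opened by the sequential version: those `i` such that for some
client `j`, `i` has the smallest clock among the facilities serving `j` and `j` has the
smallest clock among the clients served by `i`. -/
def seqOpens {F C : Type*} [Fintype F] [Fintype C]
    (x : F → C → ℝ) (Q : F → ℝ) (R : C → ℝ) (i : F) : Prop :=
  ∃ j : C, nextV x Q R (Sum.inr j) = some (Sum.inl i) ∧
    nextV x Q R (Sum.inl i) = some (Sum.inr j)
end

/-!
Follow client `j` to `i = φ j`, the facility of smallest clock serving it, and then to
`j' = ψ i`, the client of smallest clock served by `i`. If `j' = j`, then `j ↔ i` is a 2-cycle,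
the connection path is `j, i`, and both versions assign `j` to `i`. Otherwise `R j' < R j` and
the sequential version defers to `j'`. Along any walk in the connection graph client clocks and
facility clocks never increase. So either the walk from `j'` returns at once to `i` (then both
paths end at `i`), or it stays strictly below `R j` and `Q i`, never meets `j` or `i`, and the
path of `j` is `j, i` followed by the path of `j'`. Induction on `R j` finishes the proof.
-/

section PathAux

variable {α : Type*} [DecidableEq α] {next : α → Option α}

lemma pathAux_succ_of_eq_none {v : α} (h : next v = none) (n : ℕ) (vis : List α) :
    pathAux next (n + 1) vis v = vis ++ [v] := by
  simp [pathAux, h]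

lemma pathAux_succ_of_mem {v w : α} (h : next v = some w) {vis : List α} (hw : w ∈ vis ++ [v])
    (n : ℕ) : pathAux next (n + 1) vis v = vis ++ [v] := by
  simp [pathAux, h, hw]

lemma pathAux_succ_of_not_mem {v w : α} (h : next v = some w) {vis : List α}
    (hw : w ∉ vis ++ [v]) (n : ℕ) :
    pathAux next (n + 1) vis v = pathAux next n (vis ++ [v]) w := by
  simp [pathAux, h, hw]

lemma pathAux_of_next_mem {v w : α} (h : next v = some w) {vis : List α} (hw : w ∈ vis ++ [v])
    (n : ℕ) : pathAux next n vis v = vis ++ [v] := by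
  cases n with
  | zero => rfl
  | succ n => exact pathAux_succ_of_mem h hw n

lemma mem_pathAux_of_mem (n : ℕ) {vis : List α} {v u : α} (hu : u ∈ vis ++ [v]) :
    u ∈ pathAux next n vis v := by
  induction n generalizing vis v with
  | zero => exact hu
  | succ n ih =>
    cases h : next v with
    | none => rwa [pathAux_succ_of_eq_none h]
    | some w =>
      by_cases hw : w ∈ vis ++ [v]
      · rwa [pathAux_succ_of_mem h hw]
      · rw [pathAux_succ_of_not_mem h hw]
        exact ih (List.mem_append_left _ hu)

lemma pathAux_invariant {S : α → Prop} (hS : ∀ u w, S u → next u = some w → S w) (n : ℕ)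
    {vis : List α} {v : α} (hv : S v) {u : α} (hu : u ∈ pathAux next n vis v) :
    u ∈ vis ∨ S u := by
  have hstop : ∀ {vis : List α} {v : α}, S v → u ∈ vis ++ [v] → u ∈ vis ∨ S u := by
    intro vis v hv hu
    rcases List.mem_append.1 hu with hu | hu
    exacts [Or.inl hu, Or.inr (List.mem_singleton.1 hu ▸ hv)]
  induction n generalizing vis v with
  | zero => exact hstop hv hu
  | succ n ih =>
    cases h : next v with
    | none => exact hstop hv (by rwa [pathAux_succ_of_eq_none h] at hu)
    | some w =>
      by_cases hw : w ∈ vis ++ [v]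
      · exact hstop hv (by rwa [pathAux_succ_of_mem h hw] at hu)
      · rw [pathAux_succ_of_not_mem h hw] at hu
        exact (ih (hS v w hv h) hu).elim (hstop hv) Or.inr

lemma pathAux_append_of_disjoint (n : ℕ) {vis₁ vis₀ : List α} {v : α}
    (hdisj : ∀ w ∈ pathAux next n vis₀ v, w ∉ vis₁) :
    pathAux next n (vis₁ ++ vis₀) v = vis₁ ++ pathAux next n vis₀ v := by
  induction n generalizing vis₀ v with
  | zero => simp [pathAux]
  | succ n ih =>
    cases h : next v with
    | none => simp [pathAux_succ_of_eq_none h]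
    | some w =>
      by_cases hw : w ∈ vis₀ ++ [v]
      · rw [pathAux_succ_of_mem h hw, pathAux_succ_of_mem h (by simp_all)]
        simp
      · rw [pathAux_succ_of_not_mem h hw] at hdisj ⊢
        have hw₁ : w ∉ vis₁ := hdisj w (mem_pathAux_of_mem n (by simp))
        rw [pathAux_succ_of_not_mem h (by simp_all), List.append_assoc, ih hdisj]

lemma pathAux_succ_of_card_le [Fintype α] (n : ℕ) {vis : List α} {v : α}
    (hnd : (vis ++ [v]).Nodup) (hcard : Fintype.card α ≤ n + vis.length + 1) :
    pathAux next (n + 1) vis v = pathAux next n vis v := by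
  induction n generalizing vis v with
  | zero =>
    have hall : ∀ u : α, u ∈ vis ++ [v] := by
      have huniv : (vis ++ [v]).toFinset = Finset.univ := by
        apply Finset.eq_univ_of_card
        have := hnd.length_le_card
        rw [List.toFinset_card_of_nodup hnd]
        simp only [List.length_append, List.length_singleton] at this ⊢
        omega
      intro u
      simp [← List.mem_toFinset, huniv]
    cases h : next v with
    | none => exact pathAux_succ_of_eq_none h 0 vis
    | some w => exact pathAux_succ_of_mem h (hall w) 0
  | succ n ih =>
    cases h : next v with
    | none => rw [pathAux_succ_of_eq_none h, pathAux_succ_of_eq_none h]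
    | some w =>
      by_cases hw : w ∈ vis ++ [v]
      · rw [pathAux_succ_of_mem h hw, pathAux_succ_of_mem h hw]
      · rw [pathAux_succ_of_not_mem h hw, pathAux_succ_of_not_mem h hw]
        have hdisj : ∀ a ∈ vis ++ [v], ∀ b ∈ [w], a ≠ b :=
          fun a ha b hb hab => hw (by simp_all)
        exact ih (List.nodup_append.2 ⟨hnd, List.nodup_singleton w, hdisj⟩)
          (by simp only [List.length_append, List.length_singleton]; omega)

variable [Fintype α]

-- `Fintype.card α` is enough fuel: the walk then stops only at a sink or before a repeated vertex.
def walkFrom (next : α → Option α) (v : α) : List α :=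
  pathAux next (Fintype.card α) [] v

lemma mem_walkFrom_self (v : α) : v ∈ walkFrom next v :=
  mem_pathAux_of_mem _ (by simp)

lemma mem_walkFrom_of_next {v w : α} (h : next v = some w) : w ∈ walkFrom next v := by
  obtain ⟨n, hn⟩ := Nat.exists_eq_add_one.2 (Fintype.card_pos_iff.2 ⟨v⟩)
  unfold walkFrom
  rw [hn]
  by_cases hw : w ∈ [] ++ [v]
  · rw [pathAux_succ_of_mem h hw]; exact hw
  · rw [pathAux_succ_of_not_mem h hw]; exact mem_pathAux_of_mem n (by simp)

lemma walkFrom_invariant {S : α → Prop} (hS : ∀ u w, S u → next u = some w → S w) {v : α}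
    (hv : S v) {u : α} (hu : u ∈ walkFrom next v) : S u :=
  (pathAux_invariant hS _ hv hu).resolve_left List.not_mem_nil

lemma walkFrom_of_next_of_not_mem {v w : α} (h : next v = some w) (hv : v ∉ walkFrom next w) :
    walkFrom next v = v :: walkFrom next w := by
  have hwv : w ∉ [] ++ [v] := by
    rintro hw
    obtain rfl : w = v := by simpa using hw
    exact hv (mem_walkFrom_self w)
  obtain ⟨n, hn⟩ := Nat.exists_eq_add_one.2 (Fintype.card_pos_iff.2 ⟨v⟩)
  have hfuel : pathAux next n [] w = walkFrom next w := by
    rw [walkFrom, hn, pathAux_succ_of_card_le n (by simp) (by simp [hn])]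
  calc walkFrom next v = pathAux next n ([v] ++ []) w := by
        rw [walkFrom, hn, pathAux_succ_of_not_mem h hwv]; rfl
    _ = [v] ++ pathAux next n [] w := by
        refine pathAux_append_of_disjoint n fun u hu huv => hv ?_
        rwa [hfuel, List.mem_singleton.1 huv] at hu
    _ = v :: walkFrom next w := by rw [hfuel]; rfl

lemma walkFrom_of_two_cycle {v w : α} (hvw : next v = some w) (hwv : next w = some v)
    (hne : v ≠ w) : walkFrom next v = [v, w] := by
  obtain ⟨n, hn⟩ := Nat.exists_eq_add_one.2 (Fintype.card_pos_iff.2 ⟨v⟩)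
  rw [walkFrom, hn, pathAux_succ_of_not_mem hvw (by simpa using hne.symm),
    pathAux_of_next_mem hwv (by simp)]
  rfl

end PathAux

lemma filter_lt_ssubset_filter_lt {β γ : Type*} [Fintype β] [Preorder γ] [DecidableLT γ]
    {f : β → γ} {a b : β} (h : f a < f b) :
    Finset.univ.filter (fun c => f c < f a) ⊂ Finset.univ.filter (fun c => f c < f b) := by
  refine (Finset.ssubset_iff_of_subset fun c hc => ?_).2 ⟨a, by simpa using h, by simp⟩
  simp only [Finset.mem_filter, Finset.mem_univ, true_and] at hc ⊢
  exact hc.trans h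

section ConnectionGraph

lemma assignedFac_append_of_mem {F C : Type*} (l₁ : List (F ⊕ C)) {l₂ : List (F ⊕ C)}
    {i : F} (h : Sum.inl i ∈ l₂) : assignedFac (l₁ ++ l₂) = assignedFac l₂ := by
  unfold assignedFac
  obtain ⟨a, ha⟩ : ∃ a, l₂.reverse.findSome? Sum.getLeft? = some a := by
    rw [← Option.isSome_iff_exists, List.isSome_findSome?, List.any_eq_true]
    exact ⟨Sum.inl i, List.mem_reverse.2 h, rfl⟩
  rw [List.reverse_append, List.findSome?_append, ha, Option.some_or]

variable {F C : Type*} [Fintype F] [Fintype C] {x : F → C → ℝ} {Q : F → ℝ} {R : C → ℝ}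

lemma exists_nextV_inl {i : F} {j : C} (h : 0 < x i j) :
    ∃ j', nextV x Q R (Sum.inl i) = some (Sum.inr j') ∧ 0 < x i j' ∧ R j' ≤ R j := by
  have hne : (cliNbrs x i).Nonempty := ⟨j, by simpa [cliNbrs] using h⟩
  obtain ⟨hmem, hmin⟩ := Classical.choose_spec ((cliNbrs x i).exists_min_image R hne)
  exact ⟨argminOn R _ hne, by simp [nextV, hne], (Finset.mem_filter.1 hmem).2,
    hmin j (by simpa [cliNbrs] using h)⟩

lemma exists_nextV_inr {i : F} {j : C} (h : 0 < x i j) :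
    ∃ i', nextV x Q R (Sum.inr j) = some (Sum.inl i') ∧ 0 < x i' j ∧ Q i' ≤ Q i := by
  have hne : (facNbrs x j).Nonempty := ⟨i, by simpa [facNbrs] using h⟩
  obtain ⟨hmem, hmin⟩ := Classical.choose_spec ((facNbrs x j).exists_min_image Q hne)
  exact ⟨argminOn Q _ hne, by simp [nextV, hne], (Finset.mem_filter.1 hmem).2,
    hmin i (by simpa [facNbrs] using h)⟩

-- Along a walk in the connection graph neither client nor facility clocks ever increase;
-- `BoundedBy q r` is the invariant (preserved by `nextV`) that expresses this.
def BoundedBy (x : F → C → ℝ) (Q : F → ℝ) (R : C → ℝ) (q r : ℝ) : F ⊕ C → Prop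
  | Sum.inl i => Q i ≤ q ∧ ∃ j, 0 < x i j ∧ R j ≤ r
  | Sum.inr j => R j ≤ r ∧ ∃ i, 0 < x i j ∧ Q i ≤ q

lemma BoundedBy.of_nextV {q r : ℝ} {u w : F ⊕ C} (hu : BoundedBy x Q R q r u)
    (h : nextV x Q R u = some w) : BoundedBy x Q R q r w := by
  cases u with
  | inl i =>
    obtain ⟨hQi, j, hij, hRj⟩ := hu
    obtain ⟨j', hnext, hij', hRj'⟩ := exists_nextV_inl (Q := Q) (R := R) hij
    obtain rfl : w = Sum.inr j' := Option.some_injective _ (h.symm.trans hnext)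
    exact ⟨hRj'.trans hRj, i, hij', hQi⟩
  | inr j =>
    obtain ⟨hRj, i, hij, hQi⟩ := hu
    obtain ⟨i', hnext, hi'j, hQi'⟩ := exists_nextV_inr (Q := Q) (R := R) hij
    obtain rfl : w = Sum.inl i' := Option.some_injective _ (h.symm.trans hnext)
    exact ⟨hQi'.trans hQi, j, hi'j, hRj⟩

variable [DecidableEq C]

lemma seqAssign_succ {j j' : C} {i : F} (h₁ : nextV x Q R (Sum.inr j) = some (Sum.inl i))
    (h₂ : nextV x Q R (Sum.inl i) = some (Sum.inr j')) (n : ℕ) :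
    seqAssign x Q R (n + 1) j = if j' = j then some i else seqAssign x Q R n j' := by
  simp only [seqAssign, h₁, h₂]

variable [DecidableEq F]

lemma connPath_eq_walkFrom (j : C) : connPath x Q R j = walkFrom (nextV x Q R) (Sum.inr j) := by
  rw [connPath, walkFrom, Fintype.card_sum]

lemma assignedFac_connPath (hQ : Function.Injective Q) (hR : Function.Injective R) {j j' : C}
    {i : F} (h₁ : nextV x Q R (Sum.inr j) = some (Sum.inl i)) (hij : 0 < x i j)
    (h₂ : nextV x Q R (Sum.inl i) = some (Sum.inr j')) (hij' : 0 < x i j') :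
    assignedFac (connPath x Q R j) =
      if j' = j then some i else assignedFac (connPath x Q R j') := by
  simp only [connPath_eq_walkFrom]
  split_ifs with hjj
  · subst hjj
    rw [walkFrom_of_two_cycle h₁ h₂ (by simp)]
    simp [assignedFac, List.findSome?]
  obtain ⟨i', h₃, hi'j', hQi'⟩ := exists_nextV_inr (Q := Q) (R := R) hij'
  by_cases hii : i' = i
  · subst hii
    rw [walkFrom_of_next_of_not_mem h₁ (by simp [walkFrom_of_two_cycle h₂ h₃, Ne.symm hjj]),
      walkFrom_of_two_cycle h₂ h₃ (by simp), walkFrom_of_two_cycle h₃ h₂ (by simp)]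
    simp [assignedFac, List.findSome?]
  have hRj' : R j' ≤ R j := by
    obtain ⟨j'', h₂', -, hRj''⟩ := exists_nextV_inl (Q := Q) (R := R) hij
    cases h₂.symm.trans h₂'
    exact hRj''
  have hRlt : R j' < R j := hRj'.lt_of_ne (hR.ne hjj)
  have hQlt : Q i' < Q i := hQi'.lt_of_ne (hQ.ne hii)
  -- Generic case: the walk from `j'` stays strictly below the clocks of `j` and `i`,
  -- so the walk from `j` is `j, i` followed by it.
  have hstart : BoundedBy x Q R (Q i') (R j') (Sum.inr j') := ⟨le_rfl, i', hi'j', le_rfl⟩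
  have hbound : ∀ u ∈ walkFrom (nextV x Q R) (Sum.inr j'), BoundedBy x Q R (Q i') (R j') u :=
    fun _ => walkFrom_invariant (fun _ _ hu h => hu.of_nextV h) hstart
  have hi : Sum.inl i ∉ walkFrom (nextV x Q R) (Sum.inr j') :=
    fun h => (hbound _ h).1.not_gt hQlt
  have hj : Sum.inr j ∉ walkFrom (nextV x Q R) (Sum.inl i) := by
    rw [walkFrom_of_next_of_not_mem h₂ hi, List.mem_cons, not_or]
    exact ⟨Sum.inr_ne_inl, fun h => (hbound _ h).1.not_gt hRlt⟩
  rw [walkFrom_of_next_of_not_mem h₁ hj, walkFrom_of_next_of_not_mem h₂ hi]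
  exact assignedFac_append_of_mem [Sum.inr j, Sum.inl i] (mem_walkFrom_of_next h₃)

lemma seqAssign_eq_assignedFac_connPath (hx : ∀ j, ∃ i, 0 < x i j) (hQ : Function.Injective Q)
    (hR : Function.Injective R) :
    ∀ (n : ℕ) (j : C), (Finset.univ.filter fun c => R c < R j).card < n →
      seqAssign x Q R n j = assignedFac (connPath x Q R j)
  | 0, _, hn => absurd hn (Nat.not_lt_zero _)
  | n + 1, j, hn => by
    obtain ⟨i₀, hi₀j⟩ := hx j
    obtain ⟨i, h₁, hij, -⟩ := exists_nextV_inr (Q := Q) (R := R) hi₀j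
    obtain ⟨j', h₂, hij', hRj'⟩ := exists_nextV_inl (Q := Q) (R := R) hij
    rw [seqAssign_succ h₁ h₂, assignedFac_connPath hQ hR h₁ hij h₂ hij']
    split_ifs with hjj
    · rfl
    have hcard := Finset.card_lt_card (filter_lt_ssubset_filter_lt (hRj'.lt_of_ne (hR.ne hjj)))
    exact seqAssign_eq_assignedFac_connPath hx hQ hR n j' (by omega)

end ConnectionGraph

lemma Preprocessed.exists_pos {F C : Type*} [Fintype F] {x : F → C → ℝ} {y : F → ℝ}
    (hxy : Preprocessed x y) (j : C) : ∃ i, 0 < x i j := by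
  obtain ⟨i, -, hi⟩ := Finset.exists_lt_of_sum_lt (s := Finset.univ) (f := fun _ => (0 : ℝ))
    (g := fun i => x i j) (by simp [hxy.2.2 j])
  exact ⟨i, hi⟩

/-- The two versions of the algorithm are equivalent: the sequential version opens exactly the
facilities on 2-cycles of the connection graph, and assigns every client to the last facility
on its connection path. -/
theorem two_versions_equivalent
    {F C : Type*} [Fintype F] [Fintype C] [DecidableEq F] [DecidableEq C]
    (x : F → C → ℝ) (y : F → ℝ) (hxy : Preprocessed x y)
    (Q : F → ℝ) (R : C → ℝ)
    (hdistinct : Function.Injective (Sum.elim Q R)) :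
    (∀ i : F, seqOpens x Q R i ↔ opens x Q R i) ∧
    (∀ j : C, seqAssign x Q R (Fintype.card C) j = assignedFac (connPath x Q R j)) := by
  refine ⟨fun i => exists_congr fun j => and_comm, fun j => ?_⟩
  refine seqAssign_eq_assignedFac_connPath hxy.exists_pos (hdistinct.comp Sum.inl_injective)
    (hdistinct.comp Sum.inr_injective) _ j ?_
  exact Finset.card_lt_card (Finset.filter_ssubset.2 ⟨j, Finset.mem_univ j, lt_irrefl _⟩)
end DFL3
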